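/- Let a be a nonzero real number and b a real number. Then the infimum of (ε + 1/(ε·L))·|a·L + b| over all ε > 0 and L ≥ 1 equals: 0 if a·b ≤ −a²; 2·|a + b| if −a² < a·b < a²; and 4·√|a·b| if a·b ≥ a². -/

import Mathlib

/-!
For fixed `L > 0`, AM-GM gives `ε + 1/(εL) ≥ 2/√L`, with equality at `ε = 1/√L`, so the
problem reduces to minimizing `2|aL + b|/√L` over `L ≥ 1`, i.e. `(aL + b)²/L = a²L + 2ab + b²/L`.
If the root `L = -b/a` of `aL + b` is at least `1`, the infimum `0` is attained there. Otherwise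
the unconstrained minimizer of `a²L + b²/L` is `L = b/a`: when `b/a ≥ 1` it is admissible and gives
`4√(ab)`, because `(aL + b)² - 4abL = (aL - b)²`; when `|b/a| < 1` the minimum over `L ≥ 1` is at
`L = 1`, because `(aL + b)² - (a + b)²L = (L - 1)(a²L - b²)`.
-/

open Real

namespace WeightedGain

noncomputable def gain (a b ε L : ℝ) : ℝ := (ε + 1 / (ε * L)) * |a * L + b|

def gainSet (a b : ℝ) : Set ℝ := {v | ∃ ε L : ℝ, 0 < ε ∧ 1 ≤ L ∧ v = gain a b ε L}

lemma four_div_le_sq_add_one_div_mul {ε L : ℝ} (hε : 0 < ε) (hL : 0 < L) :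
    4 / L ≤ (ε + 1 / (ε * L)) ^ 2 := by
  calc 4 / L = 4 * ε * (1 / (ε * L)) := by field_simp
    _ ≤ (ε + 1 / (ε * L)) ^ 2 := four_mul_le_sq_add _ _

lemma inv_sqrt_add_one_div_inv_sqrt_mul {L : ℝ} (hL : 0 < L) :
    1 / √L + 1 / (1 / √L * L) = 2 / √L := by
  field_simp
  rw [sq_sqrt hL.le]
  ring

lemma le_gain_of_sq_mul_le {a b c ε L : ℝ} (hc : 0 ≤ c) (hε : 0 < ε) (hL : 0 < L)
    (h : c ^ 2 * L ≤ 4 * (a * L + b) ^ 2) : c ≤ gain a b ε L := by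
  have hgain : 0 ≤ gain a b ε L := by unfold gain; positivity
  rw [← pow_le_pow_iff_left₀ hc hgain two_ne_zero, gain, mul_pow, sq_abs]
  calc c ^ 2 ≤ 4 / L * (a * L + b) ^ 2 := by rw [div_mul_eq_mul_div, le_div_iff₀ hL]; linarith
    _ ≤ (ε + 1 / (ε * L)) ^ 2 * (a * L + b) ^ 2 := by
      gcongr
      exact four_div_le_sq_add_one_div_mul hε hL

lemma gain_one_div_sqrt {a b L : ℝ} (hL : 0 < L) :
    gain a b (1 / √L) L = 2 * |a * L + b| / √L := by
  rw [gain, inv_sqrt_add_one_div_inv_sqrt_mul hL, div_mul_eq_mul_div]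

lemma isLeast_gainSet {a b c : ℝ} (hc : 0 ≤ c) (hmem : c ∈ gainSet a b)
    (hbound : ∀ L : ℝ, 1 ≤ L → c ^ 2 * L ≤ 4 * (a * L + b) ^ 2) :
    IsLeast (gainSet a b) c := by
  refine ⟨hmem, ?_⟩
  rintro v ⟨ε, L, hε, hL, rfl⟩
  exact le_gain_of_sq_mul_le hc hε (one_pos.trans_le hL) (hbound L hL)

lemma isLeast_gainSet_zero {a b : ℝ} (ha : a ≠ 0) (h : a * b ≤ -a ^ 2) :
    IsLeast (gainSet a b) 0 := by
  refine isLeast_gainSet le_rfl ⟨1, -b / a, one_pos, ?_, ?_⟩ fun L _ ↦ by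
    rw [zero_pow two_ne_zero, zero_mul]; positivity
  · rw [show -b / a = -(a * b) / a ^ 2 by field_simp, le_div_iff₀ (by positivity)]
    linarith
  · rw [gain, show a * (-b / a) + b = 0 by field_simp; ring, abs_zero, mul_zero]

lemma isLeast_gainSet_two_mul_abs {a b : ℝ} (h : b ^ 2 ≤ a ^ 2) :
    IsLeast (gainSet a b) (2 * |a + b|) := by
  refine isLeast_gainSet (by positivity) ⟨1, 1, one_pos, le_rfl, by norm_num [gain]⟩ ?_
  intro L hL
  have hcoef : b ^ 2 ≤ a ^ 2 * L := h.trans (le_mul_of_one_le_right (sq_nonneg a) hL)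
  rw [mul_pow, sq_abs]
  nlinarith [mul_nonneg (sub_nonneg.2 hL) (sub_nonneg.2 hcoef)]

lemma isLeast_gainSet_four_mul_sqrt {a b : ℝ} (ha : a ≠ 0) (h : a ^ 2 ≤ a * b) :
    IsLeast (gainSet a b) (4 * √|a * b|) := by
  have hab : 0 < a * b := (pow_pos (abs_pos.2 ha) 2).trans_le (by rwa [sq_abs])
  have hL : b / a = a * b / a ^ 2 := by field_simp
  have hL1 : 1 ≤ b / a := by rw [hL, le_div_iff₀ (by positivity)]; linarith
  have hL0 : 0 < b / a := one_pos.trans_le hL1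
  have hsqrt : √(b / a) * √|a * b| = |b| := by
    rw [← sqrt_mul hL0.le, abs_of_pos hab, ← sqrt_sq_eq_abs]
    congr 1
    field_simp
  refine isLeast_gainSet (by positivity) ⟨1 / √(b / a), b / a, by positivity, hL1, ?_⟩ ?_
  · rw [gain_one_div_sqrt hL0, show a * (b / a) + b = 2 * b by field_simp; ring,
      abs_mul 2 b, abs_two, eq_div_iff (sqrt_pos.2 hL0).ne', ← hsqrt]
    ring
  · intro L _
    rw [mul_pow, sq_sqrt (abs_nonneg _), abs_of_pos hab]
    nlinarith [sq_nonneg (a * L - b)]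

end WeightedGain

theorem weighted_gain_minimization (a b : ℝ) (ha : a ≠ 0) :
    IsGLB {v : ℝ | ∃ ε L : ℝ, 0 < ε ∧ 1 ≤ L ∧ v = (ε + 1 / (ε * L)) * |a * L + b|}
      (if a * b ≤ -a ^ 2 then 0
       else if a * b < a ^ 2 then 2 * |a + b|
       else 4 * Real.sqrt |a * b|) := by
  split_ifs with hneg hpos
  · exact (WeightedGain.isLeast_gainSet_zero ha hneg).isGLB
  · have hsum : 0 < a ^ 2 + a * b := by linarith [not_le.1 hneg]
    have hdiff : 0 < a ^ 2 - a * b := sub_pos.2 hpos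
    have hsq : b ^ 2 ≤ a ^ 2 := by nlinarith [mul_pos hsum hdiff]
    exact (WeightedGain.isLeast_gainSet_two_mul_abs hsq).isGLB
  · exact (WeightedGain.isLeast_gainSet_four_mul_sqrt ha (not_lt.1 hpos)).isGLB
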